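/- arXiv:1310.1215 — 2 statements merged into one kernel-verified Lean document; each statement's English description precedes it below -/
import Mathlib

section
/- Let m ≥ 2 be an integer, let F(x) = x²/2 + x^{2m}/(2m), and let T(A) = 2√2 ∫₀^A dx/√(F(A) − F(x)). Set S(m) = (2m−1)(4m−1)!!/(m·(4m)!!) − (m−1)(2m−1)!!/(m·(2m)!!). Then, as A → 0⁺, T(A) = 2π(1 − ((2m−1)!!/(2m)!!) A^{2m−2} + S(m) A^{4m−4}) + O(A^{6m−6}); that is, there exist constants C > 0 and δ > 0 such that |T(A) − 2π(1 − ((2m−1)!!/(2m)!!) A^{2m−2} + S(m) A^{4m−4})| ≤ C A^{6m−6} for all 0 < A < δ. -/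
/-!
Substituting `x = A sin θ` and using `1 - s ^ m = (1 - s) ∑_{k<m} s ^ k` with `s = sin² θ` gives
`F(A) - F(A sin θ) = (A cos θ)² / 2 · (1 + ε G(θ))`, where `ε = A^(2m-2) / m` and
`G(θ) = ∑_{k<m} sin^(2k) θ`; hence `T(A) = 4 ∫₀^{π/2} (1 + ε G)^(-1/2) dθ`.
Since `|(1 + u)^(-1/2) - (1 - u/2 + 3u²/8)| ≤ u³` for all `u ≥ 0` and `0 ≤ G ≤ m`, replacing the
integrand by its second-order Taylor polynomial costs at most `2π (εm)³ = 2π A^(6m-6)`, for every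
`A > 0`. The polynomial is integrated with Wallis' integrals `∫₀^{π/2} sin^(2k) = (π/2) w_k`,
`w_k = (2k-1)‼/(2k)‼`, and the resulting sums are evaluated in closed form through
`∑_{k<n} w_k = 2n w_n` and `∑_{k<n} k w_k = (2/3) n (n-1) w_n`.
-/

open Real Set Nat intervalIntegral

/-- Truncated subtraction gives `wallisRatio 0 = 0‼ / 0‼ = 1`, matching the convention `(-1)‼ = 1`. -/
noncomputable def wallisRatio (k : ℕ) : ℝ := ((2 * k - 1)‼ : ℝ) / ((2 * k)‼ : ℝ)

lemma wallisRatio_succ (k : ℕ) :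
    wallisRatio (k + 1) = (2 * k + 1) / (2 * k + 2) * wallisRatio k := by
  have hodd : (2 * (k + 1) - 1)‼ = (2 * k + 1) * (2 * k - 1)‼ := by
    rw [show 2 * (k + 1) - 1 = 2 * k + 1 by omega, Nat.doubleFactorial_add_one]
  have heven : (2 * (k + 1))‼ = (2 * k + 2) * (2 * k)‼ := Nat.doubleFactorial_add_two (2 * k)
  have hpos : (0 : ℝ) < ((2 * k)‼ : ℝ) := by exact_mod_cast Nat.doubleFactorial_pos _
  rw [wallisRatio, wallisRatio, hodd, heven]
  push_cast
  field_simp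

lemma integral_sin_pow_two_mul (k : ℕ) :
    ∫ x in (0 : ℝ)..π / 2, sin x ^ (2 * k) = π / 2 * wallisRatio k := by
  induction k with
  | zero => simp [wallisRatio]
  | succ k ih =>
    rw [show 2 * (k + 1) = 2 * k + 2 by ring, integral_sin_pow, ih, wallisRatio_succ]
    simp only [sin_zero, cos_pi_div_two, sin_pi_div_two]
    push_cast
    ring

lemma sum_range_wallisRatio (n : ℕ) :
    ∑ k ∈ Finset.range n, wallisRatio k = 2 * n * wallisRatio n := by
  induction n with
  | zero => simp
  | succ n ih =>
    rw [Finset.sum_range_succ, ih, wallisRatio_succ]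
    push_cast
    field_simp

lemma sum_range_mul_wallisRatio (n : ℕ) :
    ∑ k ∈ Finset.range n, (k : ℝ) * wallisRatio k = 2 / 3 * n * (n - 1) * wallisRatio n := by
  induction n with
  | zero => simp
  | succ n ih =>
    rw [Finset.sum_range_succ, ih, wallisRatio_succ]
    push_cast
    field_simp
    ring

lemma sum_range_sum_range_wallisRatio_add (n : ℕ) :
    ∑ k ∈ Finset.range n, ∑ j ∈ Finset.range n, wallisRatio (k + j)
      = 8 / 3 * n * ((2 * n - 1) * wallisRatio (2 * n) - (n - 1) * wallisRatio n) := by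
  set f : ℕ → ℝ := fun i ↦ i * wallisRatio i with hf
  have inner (k : ℕ) : ∑ j ∈ Finset.range n, wallisRatio (k + j) = 2 * f (k + n) - 2 * f k := by
    have := Finset.sum_range_add wallisRatio k n
    rw [sum_range_wallisRatio, sum_range_wallisRatio] at this
    simp only [hf]
    push_cast at this ⊢
    linarith
  have shifted : ∑ k ∈ Finset.range n, f (k + n)
      = ∑ i ∈ Finset.range (2 * n), f i - ∑ i ∈ Finset.range n, f i := by
    rw [two_mul, Finset.sum_range_add]
    simp only [add_comm n]
    ring
  simp only [inner, Finset.sum_sub_distrib, ← Finset.mul_sum]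
  rw [shifted]
  simp only [hf, sum_range_mul_wallisRatio]
  push_cast
  ring

noncomputable def sinSqGeomSum (m : ℕ) (θ : ℝ) : ℝ := ∑ k ∈ Finset.range m, (sin θ ^ 2) ^ k

lemma continuous_sinSqGeomSum (m : ℕ) : Continuous (sinSqGeomSum m) := by
  unfold sinSqGeomSum
  fun_prop

lemma sinSqGeomSum_nonneg (m : ℕ) (θ : ℝ) : 0 ≤ sinSqGeomSum m θ :=
  Finset.sum_nonneg fun _ _ ↦ by positivity

lemma sinSqGeomSum_le (m : ℕ) (θ : ℝ) : sinSqGeomSum m θ ≤ m := by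
  calc sinSqGeomSum m θ ≤ ∑ _k ∈ Finset.range m, (1 : ℝ) :=
        Finset.sum_le_sum fun _ _ ↦ pow_le_one₀ (sq_nonneg _) (sin_sq_le_one θ)
    _ = m := by simp

lemma integral_sinSqGeomSum (m : ℕ) :
    ∫ θ in (0 : ℝ)..π / 2, sinSqGeomSum m θ = π * m * wallisRatio m := by
  unfold sinSqGeomSum
  rw [integral_finsetSum fun k _ ↦ Continuous.intervalIntegrable (by fun_prop) _ _]
  simp only [← pow_mul, integral_sin_pow_two_mul, ← Finset.mul_sum, sum_range_wallisRatio]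
  ring

lemma integral_sinSqGeomSum_sq (m : ℕ) :
    ∫ θ in (0 : ℝ)..π / 2, sinSqGeomSum m θ ^ 2
      = 4 / 3 * π * m * ((2 * m - 1) * wallisRatio (2 * m) - (m - 1) * wallisRatio m) := by
  have expand (θ : ℝ) : sinSqGeomSum m θ ^ 2
      = ∑ k ∈ Finset.range m, ∑ j ∈ Finset.range m, sin θ ^ (2 * (k + j)) := by
    simp only [sinSqGeomSum, sq, Finset.sum_mul_sum, ← pow_add, pow_mul]
  simp only [expand]
  rw [integral_finsetSum fun k _ ↦ Continuous.intervalIntegrable (by fun_prop) _ _]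
  have inner (k : ℕ) : ∫ θ in (0 : ℝ)..π / 2, ∑ j ∈ Finset.range m, sin θ ^ (2 * (k + j))
      = ∑ j ∈ Finset.range m, ∫ θ in (0 : ℝ)..π / 2, sin θ ^ (2 * (k + j)) :=
    integral_finsetSum fun j _ ↦ Continuous.intervalIntegrable (by fun_prop) _ _
  simp only [inner]
  simp only [integral_sin_pow_two_mul, ← Finset.mul_sum, sum_range_sum_range_wallisRatio_add]
  ring

noncomputable def potential (m : ℕ) (x : ℝ) : ℝ := x ^ 2 / 2 + x ^ (2 * m) / (2 * m)

lemma potential_sub_potential_mul_sin {m : ℕ} (hm : 0 < m) (A θ : ℝ) :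
    potential m A - potential m (A * sin θ)
      = (A * cos θ) ^ 2 / 2 * (1 + A ^ (2 * m - 2) / m * sinSqGeomSum m θ) := by
  have geom : 1 - (sin θ ^ 2) ^ m = (1 - sin θ ^ 2) * sinSqGeomSum m θ := by
    rw [sinSqGeomSum, mul_comm, geom_sum_mul_neg]
  have hpow : A ^ (2 * m) = A ^ 2 * A ^ (2 * m - 2) := by
    rw [← pow_add]; congr 1; omega
  have hm' : (m : ℝ) ≠ 0 := by positivity
  simp only [potential, mul_pow]
  rw [pow_mul (sin θ), cos_sq', hpow]
  field_simp
  linear_combination (A ^ 2 * A ^ (2 * m - 2)) * geom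

lemma integral_inv_sqrt_potential_sub {m : ℕ} (hm : 0 < m) {A : ℝ} (hA : 0 < A) :
    ∫ x in (0 : ℝ)..A, 1 / √(potential m A - potential m x)
      = √2 * ∫ θ in (0 : ℝ)..π / 2, 1 / √(1 + A ^ (2 * m - 2) / m * sinSqGeomSum m θ) := by
  have subst := integral_comp_mul_deriv_of_deriv_nonneg (a := 0) (b := π / 2)
    (f := fun θ ↦ A * sin θ) (f' := fun θ ↦ A * cos θ)
    (g := fun x ↦ 1 / √(potential m A - potential m x)) (by fun_prop)
    (fun θ _ ↦ (hasDerivAt_sin θ).const_mul A)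
    (fun θ hθ ↦ by
      rw [min_eq_left (by positivity), max_eq_right (by positivity)] at hθ
      exact mul_nonneg hA.le (cos_nonneg_of_mem_Icc ⟨by linarith [hθ.1, pi_pos], hθ.2.le⟩))
  simp only [Function.comp_apply, sin_zero, mul_zero, sin_pi_div_two, mul_one] at subst
  rw [← subst, ← integral_const_mul]
  refine integral_congr_Ioo_of_le (by positivity) fun θ hθ ↦ ?_
  have hcos : 0 < cos θ := cos_pos_of_mem_Ioo ⟨by linarith [hθ.1, pi_pos], hθ.2⟩
  have hE : 0 < 1 + A ^ (2 * m - 2) / m * sinSqGeomSum m θ := by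
    have := sinSqGeomSum_nonneg m θ
    positivity
  rw [potential_sub_potential_mul_sin hm, mul_comm _ (1 + _), mul_div_assoc', sqrt_div' _ two_pos.le,
    sqrt_mul hE.le, sqrt_sq (by positivity)]
  field_simp

lemma abs_inv_sqrt_one_add_sub_le {u : ℝ} (hu : 0 ≤ u) :
    |1 / √(1 + u) - (1 - u / 2 + 3 / 8 * u ^ 2)| ≤ u ^ 3 := by
  set y := 1 / √(1 + u) with hy_def
  set p := 1 - u / 2 + 3 / 8 * u ^ 2 with hp_def
  have hy : 0 < y := by positivity
  have hp : 0 < p := by nlinarith [sq_nonneg (u - 2 / 3)]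
  have hy2 : y ^ 2 * (1 + u) = 1 := by
    rw [hy_def, div_pow, sq_sqrt (by linarith)]
    field_simp
  have key : (p - y) * ((p + y) * (64 * (1 + u))) = u ^ 3 * (40 - 15 * u + 9 * u ^ 2) := by
    linear_combination (-64) * hy2
  have hyp : 0 ≤ p - y := by
    have : 0 < 40 - 15 * u + 9 * u ^ 2 := by nlinarith [sq_nonneg (u - 5 / 6)]
    have hprod : 0 ≤ (p - y) * ((p + y) * (64 * (1 + u))) := by rw [key]; positivity
    exact nonneg_of_mul_nonneg_left hprod (by positivity)
  -- `40 - 15u + 9u² ≤ 64 (1 + u) p` amounts to `0 ≤ 24 + 47u - 17u² + 24u³`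
  have hq : 40 - 15 * u + 9 * u ^ 2 ≤ (p + y) * (64 * (1 + u)) := by
    nlinarith [mul_nonneg hu (sq_nonneg (u - 17 / 48))]
  rw [abs_sub_comm, abs_of_nonneg hyp]
  refine le_of_mul_le_mul_right (a := (p + y) * (64 * (1 + u))) ?_ (by positivity)
  rw [key]
  exact mul_le_mul_of_nonneg_left hq (by positivity)

lemma integral_taylor_sinSqGeomSum (m : ℕ) (ε : ℝ) :
    ∫ θ in (0 : ℝ)..π / 2, (1 - ε * sinSqGeomSum m θ / 2 + 3 / 8 * (ε * sinSqGeomSum m θ) ^ 2)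
      = π / 2 * (1 - ε * m * wallisRatio m
          + ε ^ 2 * m * ((2 * m - 1) * wallisRatio (2 * m) - (m - 1) * wallisRatio m)) := by
  have hG := continuous_sinSqGeomSum m
  simp only [mul_pow, mul_div_right_comm ε, ← mul_assoc]
  rw [integral_add (Continuous.intervalIntegrable (by fun_prop) _ _)
      (Continuous.intervalIntegrable (by fun_prop) _ _),
    integral_sub (Continuous.intervalIntegrable (by fun_prop) _ _)
      (Continuous.intervalIntegrable (by fun_prop) _ _),
    integral_const_mul, integral_const_mul, integral_sinSqGeomSum, integral_sinSqGeomSum_sq]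
  simp
  ring

lemma abs_integral_inv_sqrt_one_add_sub_le (m : ℕ) {ε : ℝ} (hε : 0 ≤ ε) :
    |(∫ θ in (0 : ℝ)..π / 2, 1 / √(1 + ε * sinSqGeomSum m θ))
        - π / 2 * (1 - ε * m * wallisRatio m
          + ε ^ 2 * m * ((2 * m - 1) * wallisRatio (2 * m) - (m - 1) * wallisRatio m))|
      ≤ π / 2 * (ε * m) ^ 3 := by
  have hG := continuous_sinSqGeomSum m
  have hu (θ : ℝ) : 0 ≤ ε * sinSqGeomSum m θ := mul_nonneg hε (sinSqGeomSum_nonneg m θ)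
  have pointwise (θ : ℝ) : ‖1 / √(1 + ε * sinSqGeomSum m θ)
      - (1 - ε * sinSqGeomSum m θ / 2 + 3 / 8 * (ε * sinSqGeomSum m θ) ^ 2)‖ ≤ (ε * m) ^ 3 :=
    (abs_inv_sqrt_one_add_sub_le (hu θ)).trans
      (pow_le_pow_left₀ (hu θ) (mul_le_mul_of_nonneg_left (sinSqGeomSum_le m θ) hε) 3)
  have hcont : Continuous fun θ ↦ 1 / √(1 + ε * sinSqGeomSum m θ) :=
    continuous_const.div (by fun_prop) fun θ ↦ (Real.sqrt_pos.2 (by linarith [hu θ])).ne'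
  rw [← integral_taylor_sinSqGeomSum, ← integral_sub (hcont.intervalIntegrable _ _)
    (Continuous.intervalIntegrable (by fun_prop) _ _)]
  calc _ ≤ (ε * m) ^ 3 * |π / 2 - 0| := norm_integral_le_of_norm_le_const fun θ _ ↦ pointwise θ
    _ = π / 2 * (ε * m) ^ 3 := by rw [sub_zero, abs_of_pos (by positivity), mul_comm]

lemma abs_period_sub_le {m : ℕ} (hm : 0 < m) {A : ℝ} (hA : 0 < A) :
    |2 * √2 * (∫ x in (0 : ℝ)..A, 1 / √(potential m A - potential m x))
        - 2 * π * (1 - wallisRatio m * A ^ (2 * m - 2)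
          + ((2 * m - 1) * wallisRatio (2 * m) - (m - 1) * wallisRatio m) / m * A ^ (4 * m - 4))|
      ≤ 2 * π * A ^ (6 * m - 6) := by
  rw [integral_inv_sqrt_potential_sub hm hA]
  set ε := A ^ (2 * m - 2) / m
  have hm' : (m : ℝ) ≠ 0 := by positivity
  have hεm : ε * m = A ^ (2 * m - 2) := div_mul_cancel₀ _ hm'
  have h4 : A ^ (4 * m - 4) = (ε * m) ^ 2 := by rw [hεm, ← pow_mul]; congr 1; omega
  have h6 : A ^ (6 * m - 6) = (ε * m) ^ 3 := by rw [hεm, ← pow_mul]; congr 1; omega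
  have h22 : √2 * √2 = 2 := Real.mul_self_sqrt two_pos.le
  rw [← hεm, h4, h6]
  set I := ∫ θ in (0 : ℝ)..π / 2, 1 / √(1 + ε * sinSqGeomSum m θ)
  calc _ = 4 * |I - π / 2 * (1 - ε * m * wallisRatio m
          + ε ^ 2 * m * ((2 * m - 1) * wallisRatio (2 * m) - (m - 1) * wallisRatio m))| := by
        rw [← abs_of_pos (four_pos : (0 : ℝ) < 4), ← abs_mul,
          show 2 * √2 * (√2 * I) = 4 * I by linear_combination (2 * I) * h22]
        congr 1
        field_simp
        ring
    _ ≤ 4 * (π / 2 * (ε * m) ^ 3) := by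
        gcongr
        exact abs_integral_inv_sqrt_one_add_sub_le m (by positivity)
    _ = 2 * π * (ε * m) ^ 3 := by ring

/-- Taylor expansion at `A = 0` of the period function of `ẋ = −y, ẏ = x + x^(2m−1)`:
`T(A) = 2π(1 − ((2m−1)!!/(2m)!!) A^(2m−2) + S(m) A^(4m−4)) + O(A^(6m−6))`. -/
theorem period_function_taylor_at_zero (m : ℕ) (hm : 2 ≤ m)
    (F T : ℝ → ℝ)
    (hF : ∀ x : ℝ, F x = x ^ 2 / 2 + x ^ (2 * m) / (2 * m))
    (hT : ∀ A : ℝ, T A = 2 * Real.sqrt 2 * ∫ x in (0:ℝ)..A, 1 / Real.sqrt (F A - F x))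
    (S : ℝ)
    (hS : S = (2 * (m : ℝ) - 1) * (Nat.doubleFactorial (4 * m - 1) : ℝ) /
            ((m : ℝ) * (Nat.doubleFactorial (4 * m) : ℝ))
        - ((m : ℝ) - 1) * (Nat.doubleFactorial (2 * m - 1) : ℝ) /
            ((m : ℝ) * (Nat.doubleFactorial (2 * m) : ℝ))) :
    ∃ C > (0 : ℝ), ∃ δ > (0 : ℝ), ∀ A : ℝ, 0 < A → A < δ →
      |T A - 2 * π * (1
          - ((Nat.doubleFactorial (2 * m - 1) : ℝ) / (Nat.doubleFactorial (2 * m) : ℝ))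
              * A ^ (2 * m - 2)
          + S * A ^ (4 * m - 4))| ≤ C * A ^ (6 * m - 6) := by
  have hF' : F = potential m := funext hF
  subst hF'
  have hw : ((4 * m - 1)‼ : ℝ) / ((4 * m)‼ : ℝ) = wallisRatio (2 * m) := by
    rw [wallisRatio, ← mul_assoc, show (2 * 2 : ℕ) = 4 from rfl]
  have hS' : S = ((2 * m - 1) * wallisRatio (2 * m) - (m - 1) * wallisRatio m) / m := by
    rw [hS, ← hw, wallisRatio]
    field_simp
  refine ⟨2 * π, by positivity, 1, one_pos, fun A hA _ ↦ ?_⟩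
  rw [hT, hS']
  exact abs_period_sub_le (by omega) hA
end

section
/- Let k ≠ 0 be a real number and m ≥ 1 a real number, and let F(x) = ∫₀^x s/(s² + k²)^m ds (explicitly, F(x) = (1/2)ln((x²+k²)/k²) if m = 1, and F(x) = (1/(2(m−1)))(k^{−2(m−1)} − (x²+k²)^{−(m−1)}) if m > 1). Then the period function T(A) = 2√2 ∫₀^A dx/√(F(A) − F(x)) of the system ẋ = y, ẏ = −x/(x²+k²)^m is strictly increasing on (0, ∞). -/
/-!
Substituting `x = A u` gives
`∫₀^A dx / √(F A - F x) = ∫₀¹ du / √((F A - F (A u)) / A²)`.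
If `F' x = x g x` with `g` positive and strictly decreasing on `(0, ∞)` (here
`g x = (x² + k²)^(-m)`), then for `A < B` the function `v ↦ F (A v) / A² - F (B v) / B²` has
derivative `v (g (A v) - g (B v)) > 0`, so the integrand strictly increases with `A`.
Integrability at `u = 1` comes from `F A - F x ≥ g A (A² - x²) / 2`, which holds because
`s ↦ F s - g A s² / 2` is monotone on `[0, A]`.
-/

open Real Set MeasureTheory intervalIntegral

theorem integral_one_div_sqrt_sub_eq (F : ℝ → ℝ) {A : ℝ} (hA : 0 < A) :
    ∫ x in (0 : ℝ)..A, 1 / √(F A - F x) =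
      ∫ u in (0 : ℝ)..1, 1 / √((F A - F (A * u)) / A ^ 2) := by
  have h := smul_integral_comp_mul_left (fun x => 1 / √(F A - F x)) A (a := 0) (b := 1)
  rw [mul_zero, mul_one] at h
  rw [← h, smul_eq_mul, ← intervalIntegral.integral_const_mul]
  congr 1 with u
  rw [sqrt_div' _ (sq_nonneg A), sqrt_sq hA.le]
  field_simp

theorem intervalIntegrable_one_div_sqrt_of_mul_one_sub_le {D : ℝ → ℝ} (hD : Continuous D)
    {c : ℝ} (hc : 0 < c) (hle : ∀ u ∈ Ioo 0 1, c * (1 - u) ≤ D u) :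
    IntervalIntegrable (fun u => 1 / √(D u)) volume 0 1 := by
  have hmaj :
      IntervalIntegrable (fun u : ℝ => (√c)⁻¹ * (1 - u) ^ (-(1 / 2) : ℝ)) volume 0 1 := by
    have h := (intervalIntegrable_rpow' (r := -(1 / 2)) (a := 1) (b := 0)
      (by norm_num)).comp_sub_left 1
    simp only [sub_self, sub_zero] at h
    exact h.const_mul (√c)⁻¹
  rw [intervalIntegrable_iff_integrableOn_Ioo_of_le zero_le_one] at hmaj ⊢
  refine hmaj.mono' (measurable_const.div hD.measurable.sqrt).aestronglyMeasurable.restrict ?_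
  filter_upwards [ae_restrict_mem measurableSet_Ioo] with u hu
  have hpos : 0 < c * (1 - u) := mul_pos hc (sub_pos.2 hu.2)
  rw [norm_of_nonneg (by positivity), rpow_neg (sub_pos.2 hu.2).le, ← sqrt_eq_rpow,
    ← mul_inv, ← sqrt_mul hc.le, ← one_div]
  exact one_div_le_one_div_of_le (sqrt_pos.2 hpos) (sqrt_le_sqrt (hle u hu))

section Potential

variable {F g : ℝ → ℝ}

theorem mul_sq_sub_sq_le_sub_of_hasDerivAt (hF : ∀ x, HasDerivAt F (x * g x) x)
    (hg : AntitoneOn g (Ioi 0)) {a b : ℝ} (ha : 0 ≤ a) (hab : a ≤ b) :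
    g b * (b ^ 2 - a ^ 2) / 2 ≤ F b - F a := by
  rcases hab.eq_or_lt with rfl | hab
  · simp
  have hd : ∀ s, HasDerivAt (fun s => F s - g b * s ^ 2 / 2) (s * (g s - g b)) s := fun s => by
    refine ((hF s).sub (((hasDerivAt_pow 2 s).const_mul (g b)).div_const 2)).congr_deriv ?_
    push_cast
    ring
  have hmono : MonotoneOn (fun s => F s - g b * s ^ 2 / 2) (Icc a b) := by
    refine monotoneOn_of_hasDerivWithinAt_nonneg (convex_Icc a b)
      (fun s _ => (hd s).continuousAt.continuousWithinAt) (fun s _ => (hd s).hasDerivWithinAt) ?_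
    rw [interior_Icc]
    rintro s ⟨has, hsb⟩
    have hs : 0 < s := ha.trans_lt has
    exact mul_nonneg hs.le (sub_nonneg.2 (hg hs (hs.trans hsb) hsb.le))
  have := hmono (left_mem_Icc.2 hab.le) (right_mem_Icc.2 hab.le) hab.le
  linarith

theorem half_mul_one_sub_le_div_sq (hF : ∀ x, HasDerivAt F (x * g x) x)
    (hg : AntitoneOn g (Ioi 0)) {A u : ℝ} (hA : 0 < A) (hgA : 0 ≤ g A) (hu : u ∈ Icc 0 1) :
    g A * (1 - u) / 2 ≤ (F A - F (A * u)) / A ^ 2 := by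
  have h := mul_sq_sub_sq_le_sub_of_hasDerivAt hF hg (mul_nonneg hA.le hu.1)
    (mul_le_of_le_one_right hA.le hu.2)
  rw [le_div_iff₀ (by positivity)]
  nlinarith [mul_nonneg hgA (mul_nonneg hu.1 (sub_nonneg.2 hu.2)), sq_nonneg A]

theorem div_sq_sub_lt_div_sq_sub (hF : ∀ x, HasDerivAt F (x * g x) x)
    (hg : StrictAntiOn g (Ioi 0)) {A B u : ℝ} (hA : 0 < A) (hAB : A < B) (hu : 0 ≤ u)
    (hu1 : u < 1) :
    (F B - F (B * u)) / B ^ 2 < (F A - F (A * u)) / A ^ 2 := by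
  have hB : 0 < B := hA.trans hAB
  have hd : ∀ v, HasDerivAt (fun v => F (A * v) / A ^ 2 - F (B * v) / B ^ 2)
      (v * (g (A * v) - g (B * v))) v := fun v => by
    have hA' := ((hF (A * v)).comp v ((hasDerivAt_id v).const_mul A)).div_const (A ^ 2)
    have hB' := ((hF (B * v)).comp v ((hasDerivAt_id v).const_mul B)).div_const (B ^ 2)
    refine (hA'.sub hB').congr_deriv ?_
    field_simp
  have hmono : StrictMonoOn (fun v => F (A * v) / A ^ 2 - F (B * v) / B ^ 2) (Icc u 1) := by
    refine strictMonoOn_of_hasDerivWithinAt_pos (convex_Icc u 1)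
      (fun v _ => (hd v).continuousAt.continuousWithinAt) (fun v _ => (hd v).hasDerivWithinAt) ?_
    rw [interior_Icc]
    rintro v ⟨huv, -⟩
    have hv : 0 < v := hu.trans_lt huv
    exact mul_pos hv (sub_pos.2 (hg (mul_pos hA hv) (mul_pos hB hv)
      (mul_lt_mul_of_pos_right hAB hv)))
  have := hmono (left_mem_Icc.2 hu1.le) (right_mem_Icc.2 hu1.le) hu1
  simp only [mul_one] at this
  rw [sub_div, sub_div]
  linarith

theorem strictMonoOn_integral_one_div_sqrt_sub
    (hF : ∀ x, HasDerivAt F (x * g x) x) (hg_pos : ∀ x, 0 < x → 0 < g x)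
    (hg : StrictAntiOn g (Ioi 0)) :
    StrictMonoOn (fun A => ∫ x in (0 : ℝ)..A, 1 / √(F A - F x)) (Ioi 0) := by
  have hFc : Continuous F := continuous_iff_continuousAt.2 fun x => (hF x).continuousAt
  have hint : ∀ A : ℝ, 0 < A →
      IntervalIntegrable (fun u => 1 / √((F A - F (A * u)) / A ^ 2)) volume 0 1 := fun A hA =>
    intervalIntegrable_one_div_sqrt_of_mul_one_sub_le (by fun_prop) (half_pos (hg_pos A hA))
      fun u hu => by
        simpa only [mul_div_right_comm] using
          half_mul_one_sub_le_div_sq hF hg.antitoneOn hA (hg_pos A hA).le (Ioo_subset_Icc_self hu)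
  intro A hA B hB hAB
  simp only
  rw [integral_one_div_sqrt_sub_eq F hA, integral_one_div_sqrt_sub_eq F hB, ← sub_pos,
    ← intervalIntegral.integral_sub (hint B hB) (hint A hA)]
  refine intervalIntegral_pos_of_pos_on ((hint B hB).sub (hint A hA)) (fun u hu => ?_) one_pos
  have hgap : 0 < (F B - F (B * u)) / B ^ 2 :=
    (half_pos (mul_pos (hg_pos B hB) (sub_pos.2 hu.2))).trans_le
      (half_mul_one_sub_le_div_sq hF hg.antitoneOn hB (hg_pos B hB).le (Ioo_subset_Icc_self hu))
  exact sub_pos.2 (one_div_lt_one_div_of_lt (sqrt_pos.2 hgap)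
    (sqrt_lt_sqrt hgap.le (div_sq_sub_lt_div_sq_sub hF hg hA hAB hu.1.le hu.2)))

end Potential

theorem hasDerivAt_integral_div_rpow {k m : ℝ} (hk : k ≠ 0) (x : ℝ) :
    HasDerivAt (fun x => ∫ s in (0 : ℝ)..x, s / (s ^ 2 + k ^ 2) ^ m)
      (x * ((x ^ 2 + k ^ 2) ^ m)⁻¹) x := by
  have hpos : ∀ s : ℝ, 0 < s ^ 2 + k ^ 2 := fun s => by positivity
  have hcont : Continuous fun s : ℝ => s / (s ^ 2 + k ^ 2) ^ m :=
    continuous_id.div ((continuous_pow 2).add continuous_const |>.rpow_const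
      fun s => Or.inl (hpos s).ne')
      fun s => (rpow_pos_of_pos (hpos s) m).ne'
  rw [← div_eq_mul_inv]
  exact (hcont.integral_hasStrictDerivAt 0 x).hasDerivAt

theorem strictAntiOn_inv_rpow_sq_add_sq (k : ℝ) {m : ℝ} (hm : 0 < m) :
    StrictAntiOn (fun x : ℝ => ((x ^ 2 + k ^ 2) ^ m)⁻¹) (Ioi 0) := by
  intro a (ha : 0 < a) b _ hab
  simp only
  gcongr

/-- For `k ≠ 0`, `m ≥ 1`, and the potential `F(x) = ∫₀^x s/(s²+k²)^m ds`, the period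
function `T(A) = 2√2 ∫₀^A dx/√(F(A) − F(x))` of `ẋ = y, ẏ = −x/(x²+k²)^m` is strictly
increasing on `(0, ∞)`. -/
theorem period_function_strictMono (k : ℝ) (hk : k ≠ 0) (m : ℝ) (hm : 1 ≤ m)
    (F T : ℝ → ℝ)
    (hF : ∀ x : ℝ, F x = ∫ s in (0:ℝ)..x, s / (s ^ 2 + k ^ 2) ^ m)
    (hT : ∀ A : ℝ, T A = 2 * Real.sqrt 2 * ∫ x in (0:ℝ)..A, 1 / Real.sqrt (F A - F x)) :
    StrictMonoOn T (Set.Ioi (0 : ℝ)) := by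
  obtain rfl : F = fun x => ∫ s in (0 : ℝ)..x, s / (s ^ 2 + k ^ 2) ^ m := funext hF
  have hmono := strictMonoOn_integral_one_div_sqrt_sub (hasDerivAt_integral_div_rpow hk)
    (fun x hx => by positivity) (strictAntiOn_inv_rpow_sq_add_sq k (by linarith))
  intro A hA B hB hAB
  rw [hT, hT]
  exact mul_lt_mul_of_pos_left (hmono hA hB hAB) (by positivity)
end
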